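/- Let P₁,…,P_N ∈ S^n be positive definite and G₁,…,G_N ∈ ℝ^{n×n}, and suppose for each θ in a compact set Θ and each i, G_i(θ)ᵀ(Σⱼ π_{ji}P_j)G_i(θ) - P_i ≺ 0, where G_i(θ) = e^{Aθ}J_i depends continuously on θ. Then there exists ρ ∈ (0,1) such that for every θ ∈ Θ, every x ∈ ℝ^n, and i = argmin_j xᵀP_jx: min_j (G_i(θ)x)ᵀ P_j (G_i(θ)x) ≤ ρ · xᵀ P_i x. -/

import Mathlib

open Matrix NormedSpace Set

/-!
On the compact set `Θ × {1, …, N}`, the strict Lyapunov–Metzler inequalities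
`P_i - G_i(θ)ᵀ Q_i G_i(θ) ≻ 0`, with `Q_i = ∑ⱼ π_{ji} P_j`, hold uniformly: by compactness of the unit
sphere, `xᵀ (P_i - G_iᵀ Q_i G_i) x ≥ c ‖x‖²` for a single `c > 0`, while `xᵀ P_i x ≤ d ‖x‖²` with
`d ≥ 2c`, so `G_iᵀ Q_i G_i ≼ (1 - c / d) P_i`. Since the columns of `π` are probability vectors,
`min_j yᵀ P_j y ≤ yᵀ Q_i y`, and `y = G_i(θ) x` gives the contraction.
-/

namespace Matrix

variable {ι : Type*} [Fintype ι]

theorem continuous_exp_smul [DecidableEq ι] (A : Matrix ι ι ℝ) :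
    Continuous fun t : ℝ => exp (t • A) := by
  -- `exp` depends only on the topology, so any compatible normed-algebra structure will do.
  let : NormedRing (Matrix ι ι ℝ) := Matrix.linftyOpNormedRing
  let : NormedAlgebra ℝ (Matrix ι ι ℝ) := Matrix.linftyOpNormedAlgebra
  let : NormedAlgebra ℚ (Matrix ι ι ℝ) := NormedAlgebra.restrictScalars ℚ ℝ _
  fun_prop

theorem dotProduct_transpose_mul_mul_mulVec (G Q : Matrix ι ι ℝ) (x : ι → ℝ) :
    x ⬝ᵥ ((Gᵀ * Q * G) *ᵥ x) = (G *ᵥ x) ⬝ᵥ (Q *ᵥ (G *ᵥ x)) := by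
  rw [← mulVec_mulVec, ← mulVec_mulVec, dotProduct_mulVec, vecMul_transpose]

theorem dotProduct_sum_smul_mulVec {κ : Type*} [Fintype κ] (P : κ → Matrix ι ι ℝ) (w : κ → ℝ)
    (y : ι → ℝ) : y ⬝ᵥ ((∑ j, w j • P j) *ᵥ y) = ∑ j, w j * (y ⬝ᵥ (P j *ᵥ y)) := by
  simp only [sum_mulVec, dotProduct_sum, smul_mulVec, dotProduct_smul, smul_eq_mul]

theorem iInf_dotProduct_mulVec_le_sum_smul {κ : Type*} [Fintype κ] (P : κ → Matrix ι ι ℝ)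
    {w : κ → ℝ} (hw0 : ∀ j, 0 ≤ w j) (hw1 : ∑ j, w j = 1) (y : ι → ℝ) :
    ⨅ j, y ⬝ᵥ (P j *ᵥ y) ≤ y ⬝ᵥ ((∑ j, w j • P j) *ᵥ y) := by
  rw [dotProduct_sum_smul_mulVec]
  calc ⨅ j, y ⬝ᵥ (P j *ᵥ y) = ∑ j, w j * ⨅ j, y ⬝ᵥ (P j *ᵥ y) := by
        rw [← Finset.sum_mul, hw1, one_mul]
    _ ≤ ∑ j, w j * (y ⬝ᵥ (P j *ᵥ y)) :=
        Finset.sum_le_sum fun j _ =>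
          mul_le_mul_of_nonneg_left (ciInf_le (Finite.bddBelow_range _) j) (hw0 j)

theorem smul_dotProduct_mulVec_smul (M : Matrix ι ι ℝ) (c : ℝ) (x : ι → ℝ) :
    (c • x) ⬝ᵥ (M *ᵥ (c • x)) = c ^ 2 * (x ⬝ᵥ (M *ᵥ x)) := by
  rw [mulVec_smul, dotProduct_smul, smul_dotProduct, smul_eq_mul, smul_eq_mul]
  ring

theorem mul_norm_sq_le_dotProduct_mulVec {M : Matrix ι ι ℝ} {c : ℝ}
    (h : ∀ u ∈ Metric.sphere (0 : ι → ℝ) 1, c ≤ u ⬝ᵥ (M *ᵥ u)) (x : ι → ℝ) :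
    c * ‖x‖ ^ 2 ≤ x ⬝ᵥ (M *ᵥ x) := by
  rcases eq_or_ne x 0 with rfl | hx
  · simp
  have hx' : ‖x‖ ≠ 0 := norm_ne_zero_iff.2 hx
  have hu : ‖x‖⁻¹ • x ∈ Metric.sphere (0 : ι → ℝ) 1 := by
    rw [mem_sphere_zero_iff_norm, norm_smul, norm_inv, norm_norm, inv_mul_cancel₀ hx']
  have hxu : ‖x‖ • (‖x‖⁻¹ • x) = x := by rw [smul_smul, mul_inv_cancel₀ hx', one_smul]
  calc c * ‖x‖ ^ 2 ≤ ‖x‖ ^ 2 * ((‖x‖⁻¹ • x) ⬝ᵥ (M *ᵥ (‖x‖⁻¹ • x))) := by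
        rw [mul_comm]; exact mul_le_mul_of_nonneg_left (h _ hu) (sq_nonneg _)
    _ = x ⬝ᵥ (M *ᵥ x) := by rw [← smul_dotProduct_mulVec_smul, hxu]

end Matrix

section Compact

variable {ι : Type*} [Fintype ι] {X : Type*} [TopologicalSpace X] {K : Set X} {f : X → Matrix ι ι ℝ}

theorem continuous_dotProduct_mulVec (hf : Continuous f) :
    Continuous fun p : X × (ι → ℝ) => p.2 ⬝ᵥ (f p.1 *ᵥ p.2) :=
  continuous_snd.dotProduct ((hf.comp continuous_fst).matrix_mulVec continuous_snd)

theorem IsCompact.exists_pos_mul_norm_sq_le_dotProduct_mulVec (hK : IsCompact K)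
    (hf : Continuous f) (hpos : ∀ k ∈ K, (f k).PosDef) :
    ∃ c > 0, ∀ k ∈ K, ∀ x, c * ‖x‖ ^ 2 ≤ x ⬝ᵥ (f k *ᵥ x) := by
  obtain ⟨c, hc, hcle⟩ := (hK.prod (isCompact_sphere (0 : ι → ℝ) 1)).exists_forall_le'
    (continuous_dotProduct_mulVec hf).continuousOn
    (a := 0) fun p hp => (hpos p.1 hp.1).dotProduct_mulVec_pos
      (ne_zero_of_mem_unit_sphere (⟨p.2, hp.2⟩ : Metric.sphere (0 : ι → ℝ) 1))
  exact ⟨c, hc, fun k hk => mul_norm_sq_le_dotProduct_mulVec fun u hu => hcle (k, u) ⟨hk, hu⟩⟩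

theorem IsCompact.exists_dotProduct_mulVec_le_mul_norm_sq (hK : IsCompact K)
    (hf : Continuous f) : ∃ d, ∀ k ∈ K, ∀ x, x ⬝ᵥ (f k *ᵥ x) ≤ d * ‖x‖ ^ 2 := by
  obtain ⟨d, hd⟩ := ((hK.prod (isCompact_sphere (0 : ι → ℝ) 1)).bddBelow_image
    (continuous_dotProduct_mulVec (f := -f) hf.neg).continuousOn)
  refine ⟨-d, fun k hk x => ?_⟩
  have hneg := mul_norm_sq_le_dotProduct_mulVec (M := -f k) (c := d)
    (fun u hu => hd ⟨(k, u), ⟨hk, hu⟩, rfl⟩) x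
  rw [neg_mulVec, dotProduct_neg] at hneg
  linarith

theorem IsCompact.exists_dotProduct_mulVec_le_mul_of_posDef_sub (hK : IsCompact K)
    {P M : X → Matrix ι ι ℝ} (hP : Continuous P) (hM : Continuous M)
    (hpos : ∀ k ∈ K, (P k - M k).PosDef) :
    ∃ ρ : ℝ, 0 < ρ ∧ ρ < 1 ∧ ∀ k ∈ K, ∀ x, x ⬝ᵥ (M k *ᵥ x) ≤ ρ * x ⬝ᵥ (P k *ᵥ x) := by
  obtain ⟨c, hc, hcle⟩ := hK.exists_pos_mul_norm_sq_le_dotProduct_mulVec (hP.sub hM) hpos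
  obtain ⟨d, hdle⟩ := hK.exists_dotProduct_mulVec_le_mul_norm_sq hP
  set D := max d (2 * c)
  have hD : 0 < D := lt_max_of_lt_right (by positivity)
  have hcD : c / D ≤ 1 / 2 := by
    rw [div_le_iff₀ hD]; linarith [le_max_right d (2 * c)]
  refine ⟨1 - c / D, by linarith, by linarith [div_pos hc hD], fun k hk x => ?_⟩
  have hgap := hcle k hk x
  rw [Pi.sub_apply, sub_mulVec, dotProduct_sub] at hgap
  have hPD : c / D * x ⬝ᵥ (P k *ᵥ x) ≤ c * ‖x‖ ^ 2 := by
    calc c / D * x ⬝ᵥ (P k *ᵥ x) ≤ c / D * (D * ‖x‖ ^ 2) :=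
          mul_le_mul_of_nonneg_left ((hdle k hk x).trans (by gcongr; exact le_max_left _ _))
            (div_pos hc hD).le
      _ = c * ‖x‖ ^ 2 := by field_simp
  linarith

end Compact

theorem stmt14_general {n N : ℕ}
    (Tmin Tmax : ℝ)
    (A : Matrix (Fin n) (Fin n) ℝ)
    (J : Fin N → Matrix (Fin n) (Fin n) ℝ)
    (P : Fin N → Matrix (Fin n) (Fin n) ℝ)
    (Pm : Matrix (Fin N) (Fin N) ℝ)
    (hPmnonneg : ∀ j i, 0 ≤ Pm j i)
    (hPmcol : ∀ i, (∑ j, Pm j i) = 1)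
    (hLM : ∀ i, ∀ θ ∈ Icc Tmin Tmax,
      (P i - (NormedSpace.exp (θ • A) * J i)ᵀ * (∑ j, Pm j i • P j) *
        (NormedSpace.exp (θ • A) * J i)).PosDef) :
    ∃ ρ : ℝ, 0 < ρ ∧ ρ < 1 ∧
      ∀ θ ∈ Icc Tmin Tmax, ∀ x : Fin n → ℝ, ∀ i : Fin N,
        (∀ j, x ⬝ᵥ (P i *ᵥ x) ≤ x ⬝ᵥ (P j *ᵥ x)) →
        (⨅ j : Fin N, ((NormedSpace.exp (θ • A) * J i) *ᵥ x) ⬝ᵥ (P j *ᵥ ((NormedSpace.exp (θ • A) * J i) *ᵥ x))) ≤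
          ρ * (x ⬝ᵥ (P i *ᵥ x)) := by
  let G : ℝ × Fin N → Matrix (Fin n) (Fin n) ℝ := fun p => exp (p.1 • A) * J p.2
  have hP : Continuous fun p : ℝ × Fin N => P p.2 := continuous_of_discreteTopology.comp continuous_snd
  have hG : Continuous G := ((continuous_exp_smul A).comp continuous_fst).mul
    (continuous_of_discreteTopology.comp continuous_snd)
  have hM : Continuous fun p : ℝ × Fin N => (G p)ᵀ * (∑ j, Pm j p.2 • P j) * G p :=
    (hG.matrix_transpose.mul ((continuous_of_discreteTopology
      (f := fun i : Fin N => ∑ j, Pm j i • P j)).comp continuous_snd)).mul hG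
  obtain ⟨ρ, hρ0, hρ1, hρ⟩ :=
    (isCompact_Icc.prod isCompact_univ).exists_dotProduct_mulVec_le_mul_of_posDef_sub hP hM
      fun p hp => hLM p.2 p.1 hp.1
  refine ⟨ρ, hρ0, hρ1, fun θ hθ x i _ => ?_⟩
  calc ⨅ j, (G (θ, i) *ᵥ x) ⬝ᵥ (P j *ᵥ (G (θ, i) *ᵥ x))
      ≤ (G (θ, i) *ᵥ x) ⬝ᵥ ((∑ j, Pm j i • P j) *ᵥ (G (θ, i) *ᵥ x)) :=
        iInf_dotProduct_mulVec_le_sum_smul P (hPmnonneg · i) (hPmcol i) _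
    _ = x ⬝ᵥ (((G (θ, i))ᵀ * (∑ j, Pm j i • P j) * G (θ, i)) *ᵥ x) :=
        (dotProduct_transpose_mul_mul_mulVec _ _ x).symm
    _ ≤ ρ * x ⬝ᵥ (P i *ᵥ x) := hρ (θ, i) ⟨hθ, mem_univ i⟩ x

/-- Uniform contraction factor: by compactness of `Θ = [T_min,T_max]`, the
strict Lyapunov–Metzler inequality yields a uniform `ρ < 1` such that the
min-of-quadratics value contracts by factor `ρ` per jump, uniformly in the
dwell time `θ ∈ Θ`. -/
theorem stmt14 {n N : ℕ} [NeZero N]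
    (Tmin Tmax : ℝ) (hTT : Tmin ≤ Tmax)
    (A : Matrix (Fin n) (Fin n) ℝ)
    (J : Fin N → Matrix (Fin n) (Fin n) ℝ)
    (P : Fin N → Matrix (Fin n) (Fin n) ℝ)
    (hP : ∀ i, (P i).PosDef)
    (Pm : Matrix (Fin N) (Fin N) ℝ)
    (hPmnonneg : ∀ j i, 0 ≤ Pm j i)
    (hPmcol : ∀ i, (∑ j, Pm j i) = 1)
    (hLM : ∀ i, ∀ θ ∈ Icc Tmin Tmax,
      (P i - (NormedSpace.exp (θ • A) * J i)ᵀ * (∑ j, Pm j i • P j) *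
        (NormedSpace.exp (θ • A) * J i)).PosDef) :
    ∃ ρ : ℝ, 0 < ρ ∧ ρ < 1 ∧
      ∀ θ ∈ Icc Tmin Tmax, ∀ x : Fin n → ℝ, ∀ i : Fin N,
        (∀ j, x ⬝ᵥ (P i *ᵥ x) ≤ x ⬝ᵥ (P j *ᵥ x)) →
        (⨅ j : Fin N, ((NormedSpace.exp (θ • A) * J i) *ᵥ x) ⬝ᵥ (P j *ᵥ ((NormedSpace.exp (θ • A) * J i) *ᵥ x))) ≤
          ρ * (x ⬝ᵥ (P i *ᵥ x)) :=
  stmt14_general Tmin Tmax A J P Pm hPmnonneg hPmcol hLM
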